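/- arXiv:0802.1380 — 2 statements merged into one kernel-verified Lean document; each statement's English description precedes it below -/
import Mathlib

section
/- Let (A_n)_{n≥1} be a sequence of subsets of ℝ² such that (i) every A_n contains the origin (0,0), (ii) the sequence is bounded, i.e. there is a constant C such that ‖a‖ ≤ C for every n and every a ∈ A_n, and (iii) the sequence (n·A_n) is sup-additive, meaning that for all n ≥ 1 and all N > n one has n·A_n + (N−n)·A_{N−n} ⊆ N·A_N (Minkowski sum and scalar dilation). Then the sequence (A_n) converges and its limit equals the closure of ⋃_{n≥1} A_n; that is, liminf A_n = limsup A_n = cl(⋃_{n≥1} A_n). -/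
/-!
If `a ∈ A m` and `N = q m + r` with `r < m`, sup-additivity first gives `a ∈ A (q m)`, and then,
adding `0 ∈ A r`, the point `(q m / N) • a ∈ A N`, which lies within `r ‖a‖ / N ≤ m ‖a‖ / N` of `a`.
So the distance from `A N` to any point of the union, hence to any point of its closure, tends
to `0`, which puts the closure inside `liminf A`. The inclusions `liminf ⊆ limsup ⊆ closure` hold
for every sequence of sets.
-/

open Pointwise Filter

/-- `liminf` of a sequence of subsets of `ℝ²` (indexed by `n ≥ 1`): the set of points `a`
for which there exist points `x n ∈ A n` (for all `n ≥ 1`) with `x n → a`. -/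
def setLimInf (A : ℕ → Set (ℝ × ℝ)) : Set (ℝ × ℝ) :=
  {a | ∃ x : ℕ → ℝ × ℝ, (∀ n, 1 ≤ n → x n ∈ A n) ∧ Tendsto x atTop (nhds a)}

/-- `limsup` of a sequence of subsets of `ℝ²` (indexed by `n ≥ 1`): the set of points `a`
for which there exist a strictly increasing sequence of indices `φ k ≥ 1` and points
`x k ∈ A (φ k)` with `x k → a`. -/
def setLimSup (A : ℕ → Set (ℝ × ℝ)) : Set (ℝ × ℝ) :=
  {a | ∃ φ : ℕ → ℕ, StrictMono φ ∧ (∀ k, 1 ≤ φ k) ∧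
    ∃ x : ℕ → ℝ × ℝ, (∀ k, x k ∈ A (φ k)) ∧ Tendsto x atTop (nhds a)}

open Metric

def IsSupAdditive {E : Type*} [AddCommGroup E] [Module ℝ E] (A : ℕ → Set E) : Prop :=
  ∀ n N : ℕ, 1 ≤ n → n < N → (n : ℝ) • A n + ((N - n : ℕ) : ℝ) • A (N - n) ⊆ (N : ℝ) • A N

namespace IsSupAdditive

section Module

variable {E : Type*} [AddCommGroup E] [Module ℝ E] {A : ℕ → Set E}

theorem div_smul_add_div_smul_mem (hA : IsSupAdditive A) {n N : ℕ} (hn : 1 ≤ n) (hnN : n < N)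
    {a b : E} (ha : a ∈ A n) (hb : b ∈ A (N - n)) :
    ((n : ℝ) / N) • a + (((N - n : ℕ) : ℝ) / N) • b ∈ A N := by
  have hN : (N : ℝ) ≠ 0 := by norm_cast; omega
  have h := hA n N hn hnN (Set.add_mem_add (Set.smul_mem_smul_set ha) (Set.smul_mem_smul_set hb))
  rw [Set.mem_smul_set_iff_inv_smul_mem₀ hN, smul_add, smul_smul, smul_smul] at h
  simpa only [div_eq_inv_mul] using h

theorem mem_mul (hA : IsSupAdditive A) {m : ℕ} (hm : 1 ≤ m) {a : E} (ha : a ∈ A m) {q : ℕ}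
    (hq : 1 ≤ q) : a ∈ A (q * m) := by
  induction q, hq using Nat.le_induction with
  | base => simpa using ha
  | succ q hq ih =>
    have hlt : q * m < (q + 1) * m := Nat.mul_lt_mul_of_pos_right (by omega) (by omega)
    have hsub : (q + 1) * m - q * m = m := by rw [Nat.succ_mul]; omega
    have h := hA.div_smul_add_div_smul_mem (Nat.one_le_iff_ne_zero.mpr (by positivity)) hlt ih
      (hsub ▸ ha)
    have hN : (((q + 1) * m : ℕ) : ℝ) ≠ 0 := by positivity
    rwa [← add_smul, ← add_div, ← Nat.cast_add, Nat.add_sub_cancel' hlt.le, div_self hN,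
      one_smul] at h

theorem div_smul_mem (hA : IsSupAdditive A) (h0 : ∀ n, 1 ≤ n → (0 : E) ∈ A n) {n N : ℕ}
    (hn : 1 ≤ n) (hnN : n ≤ N) {a : E} (ha : a ∈ A n) : ((n : ℝ) / N) • a ∈ A N := by
  rcases hnN.eq_or_lt with rfl | hlt
  · rwa [div_self (by norm_cast; omega), one_smul]
  · simpa using hA.div_smul_add_div_smul_mem hn hlt ha (h0 _ (by omega))

end Module

variable {E : Type*} [NormedAddCommGroup E] [NormedSpace ℝ E] {A : ℕ → Set E}

theorem infDist_le (hA : IsSupAdditive A) (h0 : ∀ n, 1 ≤ n → (0 : E) ∈ A n) {m N : ℕ}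
    (hm : 1 ≤ m) (hmN : m ≤ N) {a : E} (ha : a ∈ A m) : infDist a (A N) ≤ m * ‖a‖ / N := by
  set q := N / m
  have hq : 1 ≤ q := (Nat.one_le_div_iff (by omega)).mpr hmN
  have hqm : q * m ≤ N := Nat.div_mul_le_self N m
  have hx := hA.div_smul_mem h0 (Nat.one_le_iff_ne_zero.mpr (by positivity)) hqm
    (hA.mem_mul hm ha hq)
  have hN : (0 : ℝ) < N := by norm_cast; omega
  have hdecomp : ((q * m : ℕ) : ℝ) + (N % m : ℕ) = N := by
    rw [← Nat.cast_add, mul_comm, Nat.div_add_mod]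
  have hr : ((N % m : ℕ) : ℝ) ≤ m := by exact_mod_cast (Nat.mod_lt N (by omega)).le
  have hfrac : 1 - ((q * m : ℕ) : ℝ) / N = (N % m : ℕ) / N := by
    field_simp
    linarith
  calc infDist a (A N) ≤ dist a ((((q * m : ℕ) : ℝ) / N) • a) := infDist_le_dist_of_mem hx
    _ = ‖(1 - ((q * m : ℕ) : ℝ) / N) • a‖ := by rw [sub_smul, one_smul, dist_eq_norm]
    _ = (N % m : ℕ) / N * ‖a‖ := by
      rw [norm_smul, hfrac, Real.norm_eq_abs, abs_of_nonneg (by positivity)]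
    _ ≤ m * ‖a‖ / N := by rw [div_mul_eq_mul_div]; gcongr

theorem tendsto_infDist (hA : IsSupAdditive A) (h0 : ∀ n, 1 ≤ n → (0 : E) ∈ A n) {m : ℕ}
    (hm : 1 ≤ m) {a : E} (ha : a ∈ A m) : Tendsto (fun N ↦ infDist a (A N)) atTop (nhds 0) :=
  squeeze_zero' (Eventually.of_forall fun _ ↦ infDist_nonneg)
    ((eventually_ge_atTop m).mono fun _ hmN ↦ hA.infDist_le h0 hm hmN ha)
    (tendsto_const_div_atTop_nhds_zero_nat _)

end IsSupAdditive

theorem tendsto_infDist_of_mem_closure {X : Type*} [PseudoMetricSpace X] {A : ℕ → Set X}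
    {S : Set X} (hS : ∀ b ∈ S, Tendsto (fun N ↦ infDist b (A N)) atTop (nhds 0)) {a : X}
    (ha : a ∈ closure S) : Tendsto (fun N ↦ infDist a (A N)) atTop (nhds 0) := by
  refine Metric.tendsto_nhds.mpr fun ε hε ↦ ?_
  obtain ⟨b, hbS, hab⟩ := mem_closure_iff.mp ha (ε / 2) (half_pos hε)
  filter_upwards [Metric.tendsto_nhds.mp (hS b hbS) (ε / 2) (half_pos hε)] with N hN
  rw [Real.dist_0_eq_abs, abs_of_nonneg infDist_nonneg] at hN ⊢
  linarith [infDist_le_infDist_add_dist (x := a) (y := b) (s := A N)]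

theorem mem_setLimInf_of_tendsto_infDist {A : ℕ → Set (ℝ × ℝ)} (hne : ∀ n, 1 ≤ n → (A n).Nonempty)
    {a : ℝ × ℝ} (ha : Tendsto (fun n ↦ infDist a (A n)) atTop (nhds 0)) : a ∈ setLimInf A := by
  have hclose : ∀ n, 1 ≤ n → ∃ x ∈ A n, dist a x < infDist a (A n) + 1 / (n + 1) := fun n hn ↦
    (infDist_lt_iff (hne n hn)).mp (lt_add_of_pos_right _ Nat.one_div_pos_of_nat)
  choose! x hxA hxd using hclose
  refine ⟨x, hxA, tendsto_iff_dist_tendsto_zero.mpr ?_⟩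
  have hbound : Tendsto (fun n : ℕ ↦ infDist a (A n) + 1 / ((n : ℝ) + 1)) atTop (nhds 0) := by
    simpa using ha.add tendsto_one_div_add_atTop_nhds_zero_nat
  refine squeeze_zero' (Eventually.of_forall fun _ ↦ dist_nonneg) ?_ hbound
  filter_upwards [eventually_ge_atTop 1] with n hn
  exact (dist_comm (x n) a).trans_le (hxd n hn).le

theorem setLimInf_subset_setLimSup (A : ℕ → Set (ℝ × ℝ)) : setLimInf A ⊆ setLimSup A :=
  fun _ ⟨x, hxA, hx⟩ ↦ ⟨(· + 1), strictMono_id.add_const 1, fun k ↦ Nat.le_add_left 1 k,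
    fun k ↦ x (k + 1), fun k ↦ hxA _ (Nat.le_add_left 1 k), hx.comp (tendsto_add_atTop_nat 1)⟩

theorem setLimSup_subset_closure_iUnion (A : ℕ → Set (ℝ × ℝ)) :
    setLimSup A ⊆ closure (⋃ n, ⋃ (_ : 1 ≤ n), A n) :=
  fun _ ⟨_, _, hφ, _, hxA, hx⟩ ↦ mem_closure_of_tendsto hx
    (Eventually.of_forall fun k ↦ Set.mem_biUnion (hφ k) (hxA k))

theorem supAdditive_regions_converge_to_union_general (A : ℕ → Set (ℝ × ℝ))
    (h0 : ∀ n, 1 ≤ n → ((0, 0) : ℝ × ℝ) ∈ A n)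
    (hsup : ∀ n N : ℕ, 1 ≤ n → n < N →
      (n : ℝ) • A n + ((N - n : ℕ) : ℝ) • A (N - n) ⊆ (N : ℝ) • A N) :
    setLimInf A = closure (⋃ n, ⋃ (_ : 1 ≤ n), A n) ∧
    setLimSup A = closure (⋃ n, ⋃ (_ : 1 ≤ n), A n) := by
  have hA : IsSupAdditive A := hsup
  have hclosure : closure (⋃ n, ⋃ (_ : 1 ≤ n), A n) ⊆ setLimInf A := by
    intro a ha
    refine mem_setLimInf_of_tendsto_infDist (fun n hn ↦ ⟨0, h0 n hn⟩) ?_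
    refine tendsto_infDist_of_mem_closure (fun b hb ↦ ?_) ha
    obtain ⟨m, hm, hb⟩ := Set.mem_iUnion₂.mp hb
    exact hA.tendsto_infDist h0 hm hb
  have hsub := setLimSup_subset_closure_iUnion A
  have hle := setLimInf_subset_setLimSup A
  exact ⟨(hle.trans hsub).antisymm hclosure, hsub.antisymm (hclosure.trans hle)⟩

/-- If `(A_n)_{n ≥ 1}` is a bounded sequence of subsets of `ℝ²` containing the origin such that
`(n • A_n)` is sup-additive (`n • A_n + (N - n) • A_{N-n} ⊆ N • A_N` for `1 ≤ n < N`), then the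
sequence converges and its limit is the closure of `⋃_{n ≥ 1} A_n`. -/
theorem supAdditive_regions_converge_to_union (A : ℕ → Set (ℝ × ℝ))
    (h0 : ∀ n, 1 ≤ n → ((0, 0) : ℝ × ℝ) ∈ A n)
    (hbd : ∃ C : ℝ, ∀ n, 1 ≤ n → ∀ a ∈ A n, ‖a‖ ≤ C)
    (hsup : ∀ n N : ℕ, 1 ≤ n → n < N →
      (n : ℝ) • A n + ((N - n : ℕ) : ℝ) • A (N - n) ⊆ (N : ℝ) • A N) :
    setLimInf A = closure (⋃ n, ⋃ (_ : 1 ≤ n), A n) ∧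
    setLimSup A = closure (⋃ n, ⋃ (_ : 1 ≤ n), A n) :=
  supAdditive_regions_converge_to_union_general A h0 hsup
end

section
/- Let N ≥ 1, let 𝒳₁, 𝒳₂, 𝒴, 𝒮 be finite nonempty sets, and let X₁ = (X_{1,1},…,X_{1,N}), X₂ = (X_{2,1},…,X_{2,N}), Y = (Y_1,…,Y_N), and S be random variables on a common probability space taking values in 𝒳₁^N, 𝒳₂^N, 𝒴^N, and 𝒮 respectively. Then | I(X₁^N → Y^N ‖ X₂^N) − I(X₁^N → Y^N ‖ X₂^N, S) | ≤ H(S), i.e. | ∑_{i=1}^{N} I(X₁^i ; Y_i | Y^{i−1}, X₂^i) − ∑_{i=1}^{N} I(X₁^i ; Y_i | Y^{i−1}, X₂^i, S) | ≤ H(S), where H(S) is the Shannon entropy of S. -/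
/-!
Write `H(S | W) = H(S, W) - H(W)` and `Cᵢ = (Y^{i-1}, X₂^i)`. Expanding both mutual informations
into entropies gives, term by term,
`I(X₁^i; Yᵢ | Cᵢ) - I(X₁^i; Yᵢ | Cᵢ, S)
  = [H(S | Cᵢ) - H(S | Yᵢ, Cᵢ)] - [H(S | X₁^i, Cᵢ) - H(S | X₁^i, Yᵢ, Cᵢ)]`.
Conditioning reduces entropy, so both brackets are nonnegative. Since `(Yᵢ, Cᵢ)` is a function
of `Cᵢ₊₁` and `(X₁^i, Yᵢ, Cᵢ)` a function of `(X₁^{i+1}, Cᵢ₊₁)`, the sums of the brackets are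
dominated by telescoping sums, which are at most `H(S | C₁) ≤ H(S)`. Two numbers in `[0, H(S)]`
differ by at most `H(S)`.
-/

open Finset

/-- Probability mass of the event `X = a` under the weight function `μ` on the finite
sample space `Ω`. -/
noncomputable def pmass {Ω α : Type*} [Fintype Ω] [DecidableEq α]
    (μ : Ω → ℝ) (X : Ω → α) (a : α) : ℝ := ∑ ω, if X ω = a then μ ω else 0

/-- Shannon entropy (natural logarithm) of the discrete random variable `X` defined on the
finite probability space `(Ω, μ)`. -/
noncomputable def entropy {Ω α : Type*} [Fintype Ω] [Fintype α] [DecidableEq α]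
    (μ : Ω → ℝ) (X : Ω → α) : ℝ := ∑ a, Real.negMulLog (pmass μ X a)

/-- Conditional mutual information `I(X;Y|Z) = H(X,Z) + H(Y,Z) - H(X,Y,Z) - H(Z)`. -/
noncomputable def condMutualInfo {Ω α β γ : Type*} [Fintype Ω]
    [Fintype α] [DecidableEq α] [Fintype β] [DecidableEq β] [Fintype γ] [DecidableEq γ]
    (μ : Ω → ℝ) (X : Ω → α) (Y : Ω → β) (Z : Ω → γ) : ℝ :=
  entropy μ (fun ω => (X ω, Z ω)) + entropy μ (fun ω => (Y ω, Z ω))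
    - entropy μ (fun ω => ((X ω, Y ω), Z ω)) - entropy μ Z

section Entropy

variable {Ω α β : Type*} [Fintype Ω] {μ : Ω → ℝ}

lemma pmass_nonneg [DecidableEq α] (hμ0 : ∀ ω, 0 ≤ μ ω) (X : Ω → α) (a : α) :
    0 ≤ pmass μ X a :=
  sum_nonneg fun ω _ => by split_ifs <;> simp [hμ0 ω]

lemma sum_pmass [Fintype α] [DecidableEq α] (X : Ω → α) : ∑ a, pmass μ X a = ∑ ω, μ ω := by
  unfold pmass
  rw [sum_comm]
  simp

lemma sum_pmass_prod_left [Fintype α] [DecidableEq α] [DecidableEq β] (A : Ω → α) (X : Ω → β)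
    (x : β) : ∑ a, pmass μ (fun ω => (A ω, X ω)) (a, x) = pmass μ X x := by
  unfold pmass
  rw [sum_comm]
  simp [Prod.ext_iff, ite_and]

lemma pmass_comp [Fintype α] [DecidableEq α] [DecidableEq β] (X : Ω → α) (f : α → β) (b : β) :
    pmass μ (fun ω => f (X ω)) b = ∑ a with f a = b, pmass μ X a := by
  unfold pmass
  rw [sum_comm]
  simp

lemma pmass_le_pmass_comp [Fintype α] [DecidableEq α] [DecidableEq β] (hμ0 : ∀ ω, 0 ≤ μ ω)
    (X : Ω → α) (f : α → β) (a : α) : pmass μ X a ≤ pmass μ (fun ω => f (X ω)) (f a) := by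
  rw [pmass_comp X f]
  exact single_le_sum (fun a _ => pmass_nonneg hμ0 X a) (by simp)

lemma entropy_comp_eq_sum [Fintype α] [DecidableEq α] [Fintype β] [DecidableEq β]
    (X : Ω → α) (f : α → β) :
    entropy μ (fun ω => f (X ω)) =
      ∑ a, -(pmass μ X a * Real.log (pmass μ (fun ω => f (X ω)) (f a))) := by
  rw [entropy, ← sum_fiberwise univ f]
  refine sum_congr rfl fun b _ => ?_
  rw [Real.negMulLog, neg_mul]
  nth_rw 1 [pmass_comp]
  rw [sum_mul, ← sum_neg_distrib]
  exact sum_congr rfl fun a ha => by rw [(mem_filter.1 ha).2]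

lemma entropy_comp_le [Fintype α] [DecidableEq α] [Fintype β] [DecidableEq β]
    (hμ0 : ∀ ω, 0 ≤ μ ω) (X : Ω → α) (f : α → β) :
    entropy μ (fun ω => f (X ω)) ≤ entropy μ X := by
  rw [entropy_comp_eq_sum, entropy]
  refine sum_le_sum fun a _ => ?_
  rcases (pmass_nonneg hμ0 X a).eq_or_lt with h | h
  · simp [← h]
  · rw [Real.negMulLog, neg_mul, neg_le_neg_iff]
    exact mul_le_mul_of_nonneg_left (Real.log_le_log h (pmass_le_pmass_comp hμ0 X f a)) h.le

lemma entropy_le_of_comp [Fintype α] [DecidableEq α] [Fintype β] [DecidableEq β]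
    (hμ0 : ∀ ω, 0 ≤ μ ω) {X : Ω → α} {Y : Ω → β} (f : α → β) (h : ∀ ω, Y ω = f (X ω)) :
    entropy μ Y ≤ entropy μ X := by
  rw [funext h]
  exact entropy_comp_le hμ0 X f

lemma entropy_eq_of_comp [Fintype α] [DecidableEq α] [Fintype β] [DecidableEq β]
    (hμ0 : ∀ ω, 0 ≤ μ ω) {X : Ω → α} {Y : Ω → β} (f : α → β) (g : β → α)
    (hf : ∀ ω, Y ω = f (X ω)) (hg : ∀ ω, X ω = g (Y ω)) :
    entropy μ X = entropy μ Y :=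
  (entropy_le_of_comp hμ0 g hg).antisymm (entropy_le_of_comp hμ0 f hf)

end Entropy

lemma Real.sub_le_mul_log_div {p q : ℝ} (hp : 0 ≤ p) (hq : 0 ≤ q) (hpq : 0 < p → 0 < q) :
    p - q ≤ p * Real.log (p / q) := by
  rcases hp.eq_or_lt with rfl | hp
  · simpa using hq
  have hq := hpq hp
  have hkl := mul_nonneg hq.le (InformationTheory.klFun_nonneg (div_nonneg hp.le hq.le))
  rw [InformationTheory.klFun_apply, mul_sub, mul_add, ← mul_assoc, mul_div_cancel₀ _ hq.ne',
    mul_one] at hkl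
  linarith

section MutualInfo

variable {Ω α β γ : Type*} [Fintype Ω] {μ : Ω → ℝ}
  [Fintype α] [DecidableEq α] [Fintype β] [DecidableEq β] [Fintype γ] [DecidableEq γ]

lemma sum_pmass_mul_pmass_div_pmass (X : Ω → α) (Y : Ω → β) (Z : Ω → γ) :
    ∑ t : (α × β) × γ, pmass μ (fun ω => (X ω, Z ω)) (t.1.1, t.2) *
      pmass μ (fun ω => (Y ω, Z ω)) (t.1.2, t.2) / pmass μ Z t.2 = ∑ ω, μ ω := by
  rw [Fintype.sum_prod_type, sum_comm, ← sum_pmass Z]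
  refine sum_congr rfl fun z _ => ?_
  simp only [Fintype.sum_prod_type, ← sum_div]
  rw [← sum_mul_sum, sum_pmass_prod_left, sum_pmass_prod_left, mul_self_div_self]

lemma condMutualInfo_nonneg (hμ0 : ∀ ω, 0 ≤ μ ω) (X : Ω → α) (Y : Ω → β) (Z : Ω → γ) :
    0 ≤ condMutualInfo μ X Y Z := by
  set T := fun ω => ((X ω, Y ω), Z ω)
  set p := pmass μ T
  set a := fun t : (α × β) × γ => pmass μ (fun ω => (X ω, Z ω)) (t.1.1, t.2)
  set b := fun t : (α × β) × γ => pmass μ (fun ω => (Y ω, Z ω)) (t.1.2, t.2)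
  set c := fun t : (α × β) × γ => pmass μ Z t.2
  have hmarg : ∀ t, 0 < p t → 0 < a t ∧ 0 < b t ∧ 0 < c t := fun t hp =>
    ⟨hp.trans_le (pmass_le_pmass_comp hμ0 T (fun t => (t.1.1, t.2)) t),
      hp.trans_le (pmass_le_pmass_comp hμ0 T (fun t => (t.1.2, t.2)) t),
      hp.trans_le (pmass_le_pmass_comp hμ0 T Prod.snd t)⟩
  have hcmi : condMutualInfo μ X Y Z = ∑ t, p t * Real.log (p t / (a t * b t / c t)) := by
    have hXZ : entropy μ (fun ω => (X ω, Z ω)) = ∑ t, -(p t * Real.log (a t)) :=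
      entropy_comp_eq_sum T fun t => (t.1.1, t.2)
    have hYZ : entropy μ (fun ω => (Y ω, Z ω)) = ∑ t, -(p t * Real.log (b t)) :=
      entropy_comp_eq_sum T fun t => (t.1.2, t.2)
    have hZ : entropy μ Z = ∑ t, -(p t * Real.log (c t)) := entropy_comp_eq_sum T Prod.snd
    have hT : entropy μ T = ∑ t, Real.negMulLog (p t) := rfl
    rw [condMutualInfo, hXZ, hYZ, hZ, hT, ← sum_add_distrib, ← sum_sub_distrib,
      ← sum_sub_distrib]
    refine sum_congr rfl fun t _ => ?_
    rcases (pmass_nonneg hμ0 T t).eq_or_lt with hp | hp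
    · simp [show p t = 0 from hp.symm]
    obtain ⟨ha, hb, hc⟩ := hmarg t hp
    rw [Real.log_div hp.ne' (by positivity), Real.log_div (by positivity) (by positivity),
      Real.log_mul (by positivity) (by positivity), Real.negMulLog]
    ring
  have hq : ∑ t, a t * b t / c t = ∑ t, p t := by
    rw [sum_pmass_mul_pmass_div_pmass, sum_pmass]
  calc 0 = ∑ t, (p t - a t * b t / c t) := by rw [sum_sub_distrib, hq, sub_self]
    _ ≤ ∑ t, p t * Real.log (p t / (a t * b t / c t)) := by
      refine sum_le_sum fun t _ => Real.sub_le_mul_log_div (pmass_nonneg hμ0 T t) ?_ fun hp => ?_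
      · exact div_nonneg (mul_nonneg (pmass_nonneg hμ0 _ _) (pmass_nonneg hμ0 _ _))
          (pmass_nonneg hμ0 _ _)
      · obtain ⟨ha, hb, hc⟩ := hmarg t hp
        positivity
    _ = condMutualInfo μ X Y Z := hcmi.symm

end MutualInfo

noncomputable def condEntropy {Ω α β : Type*} [Fintype Ω] [Fintype α] [DecidableEq α]
    [Fintype β] [DecidableEq β] (μ : Ω → ℝ) (S : Ω → α) (W : Ω → β) : ℝ :=
  entropy μ (fun ω => (S ω, W ω)) - entropy μ W

section CondEntropy

variable {Ω α β γ δ : Type*} [Fintype Ω] {μ : Ω → ℝ}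
  [Fintype α] [DecidableEq α] [Fintype β] [DecidableEq β] [Fintype γ] [DecidableEq γ]
  [Fintype δ] [DecidableEq δ]

lemma condEntropy_nonneg (hμ0 : ∀ ω, 0 ≤ μ ω) (S : Ω → α) (W : Ω → β) :
    0 ≤ condEntropy μ S W :=
  sub_nonneg.2 (entropy_le_of_comp hμ0 Prod.snd fun _ => rfl)

lemma condEntropy_prod_le (hμ0 : ∀ ω, 0 ≤ μ ω) (S : Ω → α) (W : Ω → β) (V : Ω → γ) :
    condEntropy μ S (fun ω => (W ω, V ω)) ≤ condEntropy μ S W := by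
  have h := condMutualInfo_nonneg hμ0 S V W
  have hSWV : entropy μ (fun ω => (S ω, (W ω, V ω))) = entropy μ (fun ω => ((S ω, V ω), W ω)) :=
    entropy_eq_of_comp hμ0 (fun q => ((q.1, q.2.2), q.2.1)) (fun q => (q.1.1, (q.2, q.1.2)))
      (fun _ => rfl) fun _ => rfl
  have hWV : entropy μ (fun ω => (W ω, V ω)) = entropy μ (fun ω => (V ω, W ω)) :=
    entropy_eq_of_comp hμ0 Prod.swap Prod.swap (fun _ => rfl) fun _ => rfl
  rw [condMutualInfo] at h
  rw [condEntropy, condEntropy, hSWV, hWV]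
  linarith

lemma condEntropy_le_of_comp (hμ0 : ∀ ω, 0 ≤ μ ω) (S : Ω → α) {W : Ω → β} {W' : Ω → γ}
    (g : β → γ) (h : ∀ ω, W' ω = g (W ω)) : condEntropy μ S W ≤ condEntropy μ S W' := by
  have hSW : entropy μ (fun ω => (S ω, W ω)) = entropy μ (fun ω => (S ω, (W' ω, W ω))) :=
    entropy_eq_of_comp hμ0 (fun q => (q.1, (g q.2, q.2))) (fun q => (q.1, q.2.2))
      (fun ω => by rw [h]) fun _ => rfl
  have hW : entropy μ W = entropy μ (fun ω => (W' ω, W ω)) :=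
    entropy_eq_of_comp hμ0 (fun w => (g w, w)) Prod.snd (fun ω => by rw [h]) fun _ => rfl
  calc condEntropy μ S W = condEntropy μ S (fun ω => (W' ω, W ω)) := by
        rw [condEntropy, condEntropy, hSW, hW]
    _ ≤ condEntropy μ S W' := condEntropy_prod_le hμ0 S W' W

lemma condEntropy_const (hμ0 : ∀ ω, 0 ≤ μ ω) (hμ1 : ∑ ω, μ ω = 1) (S : Ω → α) :
    condEntropy μ S (fun _ => ()) = entropy μ S := by
  have hunit : entropy μ (fun _ => ()) = 0 := by simp [entropy, pmass, hμ1]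
  rw [condEntropy, hunit, sub_zero]
  exact entropy_eq_of_comp hμ0 Prod.fst (fun s => (s, ())) (fun _ => rfl) fun _ => rfl

lemma condEntropy_le_entropy (hμ0 : ∀ ω, 0 ≤ μ ω) (hμ1 : ∑ ω, μ ω = 1) (S : Ω → α)
    (W : Ω → β) : condEntropy μ S W ≤ entropy μ S :=
  condEntropy_const hμ0 hμ1 S ▸ condEntropy_le_of_comp hμ0 S (fun _ => ()) fun _ => rfl

lemma entropy_nonneg (hμ0 : ∀ ω, 0 ≤ μ ω) (hμ1 : ∑ ω, μ ω = 1) (S : Ω → α) :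
    0 ≤ entropy μ S :=
  condEntropy_const hμ0 hμ1 S ▸ condEntropy_nonneg hμ0 S _

lemma entropy_prod_congr_of_comp (hμ0 : ∀ ω, 0 ≤ μ ω) (U : Ω → α) {Z : Ω → γ} {Z' : Ω → δ}
    (f : γ → δ) (g : δ → γ) (hf : ∀ ω, Z' ω = f (Z ω)) (hg : ∀ ω, Z ω = g (Z' ω)) :
    entropy μ (fun ω => (U ω, Z ω)) = entropy μ (fun ω => (U ω, Z' ω)) :=
  entropy_eq_of_comp hμ0 (Prod.map id f) (Prod.map id g) (fun ω => by simp [hf])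
    fun ω => by simp [hg]

lemma condMutualInfo_congr_of_comp (hμ0 : ∀ ω, 0 ≤ μ ω) (X : Ω → α) (Y : Ω → β)
    {Z : Ω → γ} {Z' : Ω → δ} (f : γ → δ) (g : δ → γ) (hf : ∀ ω, Z' ω = f (Z ω))
    (hg : ∀ ω, Z ω = g (Z' ω)) : condMutualInfo μ X Y Z = condMutualInfo μ X Y Z' := by
  rw [condMutualInfo, condMutualInfo, entropy_prod_congr_of_comp hμ0 X f g hf hg,
    entropy_prod_congr_of_comp hμ0 Y f g hf hg,
    entropy_prod_congr_of_comp hμ0 (fun ω => (X ω, Y ω)) f g hf hg,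
    entropy_eq_of_comp hμ0 f g hf hg]

lemma condMutualInfo_prod_assoc {ε : Type*} [Fintype ε] [DecidableEq ε] (hμ0 : ∀ ω, 0 ≤ μ ω)
    (X : Ω → α) (Y : Ω → β) (C₁ : Ω → γ) (C₂ : Ω → δ) (S : Ω → ε) :
    condMutualInfo μ X Y (fun ω => (C₁ ω, C₂ ω, S ω)) =
      condMutualInfo μ X Y (fun ω => ((C₁ ω, C₂ ω), S ω)) :=
  condMutualInfo_congr_of_comp hμ0 X Y (fun q => ((q.1, q.2.1), q.2.2))
    (fun q => (q.1.1, q.1.2, q.2)) (fun _ => rfl) fun _ => rfl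

lemma condMutualInfo_sub_condMutualInfo_prod (hμ0 : ∀ ω, 0 ≤ μ ω) (A : Ω → α) (B : Ω → β)
    (C : Ω → γ) (S : Ω → δ) :
    condMutualInfo μ A B C - condMutualInfo μ A B (fun ω => (C ω, S ω)) =
      (condEntropy μ S C - condEntropy μ S (fun ω => (B ω, C ω))) -
        (condEntropy μ S (fun ω => (A ω, C ω)) -
          condEntropy μ S (fun ω => ((A ω, B ω), C ω))) := by
  have hA : entropy μ (fun ω => (A ω, (C ω, S ω))) = entropy μ (fun ω => (S ω, (A ω, C ω))) :=
    entropy_eq_of_comp hμ0 (fun q => (q.2.2, (q.1, q.2.1))) (fun q => (q.2.1, (q.2.2, q.1)))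
      (fun _ => rfl) fun _ => rfl
  have hB : entropy μ (fun ω => (B ω, (C ω, S ω))) = entropy μ (fun ω => (S ω, (B ω, C ω))) :=
    entropy_eq_of_comp hμ0 (fun q => (q.2.2, (q.1, q.2.1))) (fun q => (q.2.1, (q.2.2, q.1)))
      (fun _ => rfl) fun _ => rfl
  have hAB : entropy μ (fun ω => ((A ω, B ω), (C ω, S ω))) =
      entropy μ (fun ω => (S ω, ((A ω, B ω), C ω))) :=
    entropy_eq_of_comp hμ0 (fun q => (q.2.2, (q.1, q.2.1))) (fun q => (q.2.1, (q.2.2, q.1)))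
      (fun _ => rfl) fun _ => rfl
  have hC : entropy μ (fun ω => (C ω, S ω)) = entropy μ (fun ω => (S ω, C ω)) :=
    entropy_eq_of_comp hμ0 Prod.swap Prod.swap (fun _ => rfl) fun _ => rfl
  rw [condMutualInfo, condMutualInfo, condEntropy, condEntropy, condEntropy, condEntropy, hA, hB,
    hAB, hC]
  ring

end CondEntropy

lemma Fin.sum_sub_le_of_le_succ {N : ℕ} {u v : Fin N → ℝ} {c : ℝ} (hc : 0 ≤ c)
    (hu : ∀ i, u i ≤ c) (hv : ∀ i, 0 ≤ v i)
    (hstep : ∀ (i : Fin N) (h : (i : ℕ) + 1 < N), u ⟨i + 1, h⟩ ≤ v i) :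
    ∑ i, (u i - v i) ≤ c := by
  set U : ℕ → ℝ := fun k => if h : k < N then u ⟨k, h⟩ else 0
  calc ∑ i, (u i - v i) ≤ ∑ i : Fin N, (U i - U (i + 1)) := by
        refine sum_le_sum fun i _ => sub_le_sub (show U i = u i from dif_pos i.isLt).ge ?_
        by_cases h : (i : ℕ) + 1 < N
        · simpa only [U, dif_pos h] using hstep i h
        · simpa only [U, dif_neg h] using hv i
    _ = U 0 - U N := by rw [Fin.sum_univ_eq_sum_range (fun k => U k - U (k + 1)), sum_range_sub']
    _ ≤ c := by
        by_cases h : 0 < N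
        · simpa [U, h] using hu ⟨0, h⟩
        · simpa [U, h] using hc

section DirectedInfo

variable {Ω σ : Type*} [Fintype Ω] {μ : Ω → ℝ} [Fintype σ] [DecidableEq σ] {N : ℕ}

lemma sum_condEntropy_sub_le_entropy (hμ0 : ∀ ω, 0 ≤ μ ω) (hμ1 : ∑ ω, μ ω = 1)
    {υ ν : Fin N → Type*} [∀ i, Fintype (υ i)] [∀ i, DecidableEq (υ i)] [∀ i, Fintype (ν i)]
    [∀ i, DecidableEq (ν i)] (S : Ω → σ) (U : ∀ i, Ω → υ i) (V : ∀ i, Ω → ν i)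
    (hVU : ∀ (i : Fin N) (h : (i : ℕ) + 1 < N),
      ∃ g : υ ⟨i + 1, h⟩ → ν i, ∀ ω, V i ω = g (U ⟨i + 1, h⟩ ω)) :
    ∑ i, (condEntropy μ S (U i) - condEntropy μ S (V i)) ≤ entropy μ S :=
  Fin.sum_sub_le_of_le_succ (entropy_nonneg hμ0 hμ1 S)
    (fun i => condEntropy_le_entropy hμ0 hμ1 S (U i)) (fun i => condEntropy_nonneg hμ0 S (V i))
    fun i h => let ⟨g, hg⟩ := hVU i h; condEntropy_le_of_comp hμ0 S g hg

theorem abs_sum_condMutualInfo_sub_le_entropy (hμ0 : ∀ ω, 0 ≤ μ ω) (hμ1 : ∑ ω, μ ω = 1)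
    {α β γ : Fin N → Type*} [∀ i, Fintype (α i)] [∀ i, DecidableEq (α i)]
    [∀ i, Fintype (β i)] [∀ i, DecidableEq (β i)] [∀ i, Fintype (γ i)] [∀ i, DecidableEq (γ i)]
    (A : ∀ i, Ω → α i) (B : ∀ i, Ω → β i) (C : ∀ i, Ω → γ i) (S : Ω → σ)
    (hC : ∀ (i : Fin N) (h : (i : ℕ) + 1 < N),
      ∃ g : γ ⟨i + 1, h⟩ → β i × γ i, ∀ ω, (B i ω, C i ω) = g (C ⟨i + 1, h⟩ ω))
    (hAC : ∀ (i : Fin N) (h : (i : ℕ) + 1 < N),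
      ∃ g : α ⟨i + 1, h⟩ × γ ⟨i + 1, h⟩ → (α i × β i) × γ i,
        ∀ ω, ((A i ω, B i ω), C i ω) = g (A ⟨i + 1, h⟩ ω, C ⟨i + 1, h⟩ ω)) :
    |∑ i, condMutualInfo μ (A i) (B i) (C i) -
        ∑ i, condMutualInfo μ (A i) (B i) (fun ω => (C i ω, S ω))| ≤ entropy μ S := by
  rw [← sum_sub_distrib]
  simp only [condMutualInfo_sub_condMutualInfo_prod hμ0]
  rw [sum_sub_distrib]
  exact abs_sub_le_of_nonneg_of_le
    (sum_nonneg fun i _ => sub_nonneg.2 (condEntropy_le_of_comp hμ0 S Prod.snd fun _ => rfl))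
    (sum_condEntropy_sub_le_entropy hμ0 hμ1 S C _ hC)
    (sum_nonneg fun i _ => sub_nonneg.2
      (condEntropy_le_of_comp hμ0 S (fun q => (q.1.1, q.2)) fun _ => rfl))
    (sum_condEntropy_sub_le_entropy hμ0 hμ1 S (fun i ω => (A i ω, C i ω)) _ hAC)

end DirectedInfo

theorem abs_directedInfo_sub_directedInfo_state_le_entropy_general
    {Ω 𝒳₁ 𝒳₂ 𝒴 𝒮 : Type*} [Fintype Ω]
    [Fintype 𝒳₁] [DecidableEq 𝒳₁]
    [Fintype 𝒳₂] [DecidableEq 𝒳₂]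
    [Fintype 𝒴] [DecidableEq 𝒴]
    [Fintype 𝒮] [DecidableEq 𝒮]
    {N : ℕ}
    (μ : Ω → ℝ) (hμ0 : ∀ ω, 0 ≤ μ ω) (hμ1 : ∑ ω, μ ω = 1)
    (X₁ : Ω → Fin N → 𝒳₁) (X₂ : Ω → Fin N → 𝒳₂) (Y : Ω → Fin N → 𝒴) (S : Ω → 𝒮) :
    |(∑ i : Fin N, condMutualInfo μ
        (fun ω => fun j : Fin ((i : ℕ) + 1) => X₁ ω (Fin.castLE i.isLt j))
        (fun ω => Y ω i)
        (fun ω => ((fun j : Fin (i : ℕ) => Y ω (Fin.castLE i.isLt.le j)),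
          (fun j : Fin ((i : ℕ) + 1) => X₂ ω (Fin.castLE i.isLt j))))) -
      (∑ i : Fin N, condMutualInfo μ
        (fun ω => fun j : Fin ((i : ℕ) + 1) => X₁ ω (Fin.castLE i.isLt j))
        (fun ω => Y ω i)
        (fun ω => ((fun j : Fin (i : ℕ) => Y ω (Fin.castLE i.isLt.le j)),
          (fun j : Fin ((i : ℕ) + 1) => X₂ ω (Fin.castLE i.isLt j)), S ω)))| ≤
      entropy μ S := by
  simp only [condMutualInfo_prod_assoc hμ0]
  -- The witnesses drop the last entry of each prefix; `rfl` closes their equations because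
  -- `Fin.castLE` changes only the bound proof.
  exact abs_sum_condMutualInfo_sub_le_entropy hμ0 hμ1
    (fun i ω j => X₁ ω (Fin.castLE i.isLt j)) (fun i ω => Y ω i)
    (fun i ω => ((fun j : Fin i => Y ω (Fin.castLE i.isLt.le j)),
      (fun j : Fin (i + 1) => X₂ ω (Fin.castLE i.isLt j)))) S
    (fun i h => ⟨fun q => (q.1 (Fin.last i), (fun j => q.1 j.castSucc, fun j => q.2 j.castSucc)),
      fun _ => rfl⟩)
    (fun i h => ⟨fun q => ((fun j => q.1 j.castSucc, q.2.1 (Fin.last i)),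
      (fun j => q.2.1 j.castSucc, fun j => q.2.2 j.castSucc)), fun _ => rfl⟩)

/-- `|I(X₁^N → Y^N ‖ X₂^N) − I(X₁^N → Y^N ‖ X₂^N, S)| ≤ H(S)`: the directed information
causally conditioned on `X₂^N`, and its variant additionally conditioned on the random
variable `S`, differ by at most the entropy of `S`. -/
theorem abs_directedInfo_sub_directedInfo_state_le_entropy
    {Ω 𝒳₁ 𝒳₂ 𝒴 𝒮 : Type*} [Fintype Ω]
    [Fintype 𝒳₁] [DecidableEq 𝒳₁] [Nonempty 𝒳₁]
    [Fintype 𝒳₂] [DecidableEq 𝒳₂] [Nonempty 𝒳₂]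
    [Fintype 𝒴] [DecidableEq 𝒴] [Nonempty 𝒴]
    [Fintype 𝒮] [DecidableEq 𝒮] [Nonempty 𝒮]
    {N : ℕ} (hN : 1 ≤ N)
    (μ : Ω → ℝ) (hμ0 : ∀ ω, 0 ≤ μ ω) (hμ1 : ∑ ω, μ ω = 1)
    (X₁ : Ω → Fin N → 𝒳₁) (X₂ : Ω → Fin N → 𝒳₂) (Y : Ω → Fin N → 𝒴) (S : Ω → 𝒮) :
    |(∑ i : Fin N, condMutualInfo μ
        (fun ω => fun j : Fin ((i : ℕ) + 1) => X₁ ω (Fin.castLE i.isLt j))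
        (fun ω => Y ω i)
        (fun ω => ((fun j : Fin (i : ℕ) => Y ω (Fin.castLE i.isLt.le j)),
          (fun j : Fin ((i : ℕ) + 1) => X₂ ω (Fin.castLE i.isLt j))))) -
      (∑ i : Fin N, condMutualInfo μ
        (fun ω => fun j : Fin ((i : ℕ) + 1) => X₁ ω (Fin.castLE i.isLt j))
        (fun ω => Y ω i)
        (fun ω => ((fun j : Fin (i : ℕ) => Y ω (Fin.castLE i.isLt.le j)),
          (fun j : Fin ((i : ℕ) + 1) => X₂ ω (Fin.castLE i.isLt j)), S ω)))| ≤
      entropy μ S :=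
  abs_directedInfo_sub_directedInfo_state_le_entropy_general μ hμ0 hμ1 X₁ X₂ Y S
end
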